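/- Let P0, P1 be symmetric positive definite, A = (1/2) P0^{1/2} log(P0^{-1/2} P1 P0^{-1/2}) P0^{-1/2}, and P_t = exp(At) P0 exp(A't). Then dP_t/dt = A P_t + P_t A' for all t, P_0 = P0, and P_1 = P1. -/

import Mathlib

open Matrix

/-- The symmetric positive definite square root of a positive definite matrix. -/
noncomputable def sqrtm {n : ℕ} {P : Matrix (Fin n) (Fin n) ℝ} (hP : P.PosDef) :
    Matrix (Fin n) (Fin n) ℝ :=
  (hP.isHermitian.eigenvectorUnitary : Matrix (Fin n) (Fin n) ℝ) *
    diagonal ((↑) ∘ (√·) ∘ hP.isHermitian.eigenvalues) *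
    (star hP.isHermitian.eigenvectorUnitary : Matrix (Fin n) (Fin n) ℝ)

/-- Squared Frobenius norm of a real matrix. -/
noncomputable def frobSq {n : ℕ} (M : Matrix (Fin n) (Fin n) ℝ) : ℝ := (M * Mᵀ).trace

/-! With `S = P0^{1/2}` and `A = S (L/2) S⁻¹`, one has `exp A = S exp(L/2) S⁻¹` and
`exp Aᵀ = S⁻¹ exp(L/2) S` because `S` and `L` are symmetric, so `P 1 = S exp(L/2)² S = S exp L S`,
which is `P1` by the choice of `L`. The differential equation is the product rule for
`exp (t A) P0 exp (t Aᵀ)`. -/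

section Sqrtm

variable {n : ℕ} {P : Matrix (Fin n) (Fin n) ℝ} (hP : P.PosDef)

theorem sqrtm_mul_self : sqrtm hP * sqrtm hP = P := by
  set U := (hP.isHermitian.eigenvectorUnitary : Matrix (Fin n) (Fin n) ℝ)
  set D := diagonal ((↑) ∘ (√·) ∘ hP.isHermitian.eigenvalues : Fin n → ℝ)
  have hUU : star U * U = 1 := Unitary.coe_star_mul_self _
  have hDD : D * D = diagonal ((↑) ∘ hP.isHermitian.eigenvalues) := by
    rw [diagonal_mul_diagonal]
    congr 1
    ext i
    simp [Real.mul_self_sqrt (hP.posSemidef.eigenvalues_nonneg i)]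
  conv_rhs => rw [hP.isHermitian.spectral_theorem, Unitary.conjStarAlgAut_apply]
  calc sqrtm hP * sqrtm hP = U * D * (star U * U) * D * star U := by
        simp only [sqrtm, Matrix.mul_assoc]; rfl
    _ = U * (D * D) * star U := by rw [hUU, Matrix.mul_one, Matrix.mul_assoc U]
    _ = _ := by rw [hDD]; rfl

theorem isSymm_sqrtm : (sqrtm hP).IsSymm := by
  simp [IsSymm, sqrtm, Matrix.transpose_mul, Matrix.star_eq_conjTranspose, Matrix.mul_assoc]

theorem isUnit_sqrtm : IsUnit (sqrtm hP) := by
  refine (isUnit_iff_isUnit_det _).mpr (isUnit_iff_ne_zero.mpr fun h0 => hP.det_pos.ne' ?_)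
  rw [← sqrtm_mul_self hP, det_mul, h0, zero_mul]

end Sqrtm

section Congruence

variable {m : Type*} [Fintype m] [DecidableEq m]

theorem exp_half_conj_mul_mul_exp_transpose {S L : Matrix m m ℝ} (hS : S.IsSymm) (hSu : IsUnit S)
    (hL : L.IsSymm) :
    NormedSpace.exp ((1 / 2 : ℝ) • (S * L * S⁻¹)) * (S * S) *
        NormedSpace.exp ((1 / 2 : ℝ) • (S * L * S⁻¹))ᵀ = S * NormedSpace.exp L * S := by
  set E := NormedSpace.exp ((1 / 2 : ℝ) • L)
  have hSdet : IsUnit S.det := (isUnit_iff_isUnit_det S).mp hSu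
  have hexp : NormedSpace.exp ((1 / 2 : ℝ) • (S * L * S⁻¹)) = S * E * S⁻¹ := by
    rw [← Matrix.exp_conj S _ hSu, Matrix.mul_smul, Matrix.smul_mul]
  have hE : Eᵀ = E := by rw [← Matrix.exp_transpose, transpose_smul, hL.eq]
  have hEE : E * E = NormedSpace.exp L := by
    rw [← Matrix.exp_add_of_commute _ _ ((Commute.refl L).smul_left _ |>.smul_right _), ← add_smul]
    norm_num
  rw [Matrix.exp_transpose, hexp, transpose_mul, transpose_mul, hE, hS.eq,
    transpose_nonsing_inv, hS.eq]
  calc S * E * S⁻¹ * (S * S) * (S⁻¹ * (E * S)) = S * E * (S⁻¹ * S) * (S * S⁻¹) * E * S := by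
        noncomm_ring
    _ = S * NormedSpace.exp L * S := by
        rw [mul_nonsing_inv S hSdet, nonsing_inv_mul S hSdet, ← hEE]; noncomm_ring

end Congruence

theorem hasDerivAt_exp_smul_mul_mul_exp_smul {𝔸 : Type*} [NormedRing 𝔸] [NormedAlgebra ℝ 𝔸]
    [CompleteSpace 𝔸] (A B X : 𝔸) (t : ℝ) :
    HasDerivAt (fun s : ℝ => NormedSpace.exp (s • A) * X * NormedSpace.exp (s • B))
      (A * (NormedSpace.exp (t • A) * X * NormedSpace.exp (t • B)) +
        NormedSpace.exp (t • A) * X * NormedSpace.exp (t • B) * B) t :=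
  ((hasDerivAt_exp_smul_const' A t).mul_const X |>.mul (hasDerivAt_exp_smul_const B t)).congr_deriv
    (by noncomm_ring)

theorem Matrix.hasDerivAt_apply {𝕜 α m n : Type*} [NontriviallyNormedField 𝕜]
    [NormedAddCommGroup α] [NormedSpace 𝕜 α] [Fintype m] [Fintype n] {f : 𝕜 → Matrix m n α}
    {f' : Matrix m n α} {t : 𝕜} (h : HasDerivAt f f' t) (i : m) (j : n) :
    HasDerivAt (fun s => f s i j) (f' i j) t :=
  hasDerivAt_pi.mp (hasDerivAt_pi.mp h i) j

section ExpDeriv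

attribute [local instance] Matrix.linftyOpNormedRing Matrix.linftyOpNormedAlgebra

theorem hasDerivAt_exp_smul_mul_mul_exp_smul_apply {m : Type*} [Fintype m] [DecidableEq m]
    (A B X : Matrix m m ℝ) (t : ℝ) (i j : m) :
    HasDerivAt (fun s : ℝ => (NormedSpace.exp (s • A) * X * NormedSpace.exp (s • B)) i j)
      ((A * (NormedSpace.exp (t • A) * X * NormedSpace.exp (t • B)) +
        NormedSpace.exp (t • A) * X * NormedSpace.exp (t • B) * B) i j) t :=
  Matrix.hasDerivAt_apply (hasDerivAt_exp_smul_mul_mul_exp_smul A B X t) i j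

end ExpDeriv

theorem stmt_8_general {n : ℕ} {P0 P1 : Matrix (Fin n) (Fin n) ℝ}
    (hP0 : P0.PosDef)
    (L : Matrix (Fin n) (Fin n) ℝ) (hL : L.IsSymm)
    (hexpL : NormedSpace.exp L = (sqrtm hP0)⁻¹ * P1 * (sqrtm hP0)⁻¹)
    (A : Matrix (Fin n) (Fin n) ℝ)
    (hA : A = (1 / 2 : ℝ) • (sqrtm hP0 * L * (sqrtm hP0)⁻¹))
    (P : ℝ → Matrix (Fin n) (Fin n) ℝ)
    (hP : ∀ t : ℝ, P t = NormedSpace.exp (t • A) * P0 * NormedSpace.exp (t • Aᵀ)) :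
    (∀ (t : ℝ) (i j : Fin n),
        HasDerivAt (fun s : ℝ => P s i j) ((A * P t + P t * Aᵀ) i j) t) ∧
    P 0 = P0 ∧ P 1 = P1 := by
  obtain rfl : P = fun t => NormedSpace.exp (t • A) * P0 * NormedSpace.exp (t • Aᵀ) := funext hP
  refine ⟨hasDerivAt_exp_smul_mul_mul_exp_smul_apply A Aᵀ P0, by simp, ?_⟩
  set S := sqrtm hP0
  have hSu : IsUnit S := isUnit_sqrtm hP0
  have hSdet : IsUnit S.det := (isUnit_iff_isUnit_det S).mp hSu
  calc NormedSpace.exp ((1 : ℝ) • A) * P0 * NormedSpace.exp ((1 : ℝ) • Aᵀ)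
      = S * NormedSpace.exp L * S := by
        rw [one_smul, one_smul, hA, ← sqrtm_mul_self hP0]
        exact exp_half_conj_mul_mul_exp_transpose (isSymm_sqrtm hP0) hSu hL
    _ = (S * S⁻¹) * P1 * (S⁻¹ * S) := by rw [hexpL]; noncomm_ring
    _ = P1 := by rw [mul_nonsing_inv S hSdet, nonsing_inv_mul S hSdet, Matrix.one_mul, Matrix.mul_one]

theorem stmt_8 {n : ℕ} {P0 P1 : Matrix (Fin n) (Fin n) ℝ}
    (hP0 : P0.PosDef) (hP1 : P1.PosDef)
    (L : Matrix (Fin n) (Fin n) ℝ) (hL : L.IsSymm)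
    (hexpL : NormedSpace.exp L = (sqrtm hP0)⁻¹ * P1 * (sqrtm hP0)⁻¹)
    (A : Matrix (Fin n) (Fin n) ℝ)
    (hA : A = (1 / 2 : ℝ) • (sqrtm hP0 * L * (sqrtm hP0)⁻¹))
    (P : ℝ → Matrix (Fin n) (Fin n) ℝ)
    (hP : ∀ t : ℝ, P t = NormedSpace.exp (t • A) * P0 * NormedSpace.exp (t • Aᵀ)) :
    (∀ (t : ℝ) (i j : Fin n),
        HasDerivAt (fun s : ℝ => P s i j) ((A * P t + P t * Aᵀ) i j) t) ∧
    P 0 = P0 ∧ P 1 = P1 :=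
  stmt_8_general hP0 L hL hexpL A hA P hP
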